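/- arXiv:1801.07358 — 6 statements merged into one kernel-verified Lean document; each statement's English description precedes it below -/
import Mathlib

section
/- Sub-additivity of IMCC (Lemma 2.1(iii)): Let E be a real vector space, let ρ^{FC} : E → ℝ be subadditive, and let ρ^{RS}, ρ^{RC} : E → ℝ be arbitrary functionals. Let X, Y : Fin 5 → E be rows such that (a) ρ^{FC}(X j + Y j) ≥ 0 for every j ∈ Fin 5, and (b) ES_{ρ^{RS}}(X+Y)/ES_{ρ^{RC}}(X+Y) ≤ ES_{ρ^{RS}}(X)/ES_{ρ^{RC}}(X) and ES_{ρ^{RS}}(X+Y)/ES_{ρ^{RC}}(X+Y) ≤ ES_{ρ^{RS}}(Y)/ES_{ρ^{RC}}(Y). Then IMCC(X+Y) ≤ IMCC(X) + IMCC(Y), where (X + Y) j = X j + Y j. -/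
/-- FRTB expected shortfall of a row. -/
noncomputable def frtbES {E : Type*} (ρ : E → ℝ) (X : Fin 5 → E) : ℝ :=
  Real.sqrt (∑ j, (ρ (X j)) ^ 2)

/-- IMCC of a row, given the three expected-shortfall functionals. -/
noncomputable def rowIMCC {E : Type*} (ρRS ρRC ρFC : E → ℝ) (X : Fin 5 → E) : ℝ :=
  (frtbES ρRS X / frtbES ρRC X) * frtbES ρFC X

/-! The expected shortfall of the sum is bounded by the Euclidean norm of the vector
`(ρ (X j) + ρ (Y j))_j`, since subadditivity and `0 ≤ ρ (X j + Y j)` compare the squares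
coordinatewise; Minkowski's inequality splits that norm. The ratio in front of the sum's IMCC is
nonnegative and dominated by the ratios of `X` and `Y`. -/

theorem Real.sqrt_sum_add_sq_le {ι : Type*} [Fintype ι] (a b : ι → ℝ) :
    √(∑ j, (a j + b j) ^ 2) ≤ √(∑ j, a j ^ 2) + √(∑ j, b j ^ 2) := by
  simpa [EuclideanSpace.norm_eq, sq_abs] using
    norm_add_le (WithLp.toLp 2 a : EuclideanSpace ℝ ι) (WithLp.toLp 2 b)

theorem frtbES_nonneg {E : Type*} (ρ : E → ℝ) (X : Fin 5 → E) : 0 ≤ frtbES ρ X :=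
  Real.sqrt_nonneg _

theorem frtbES_add_le {E : Type*} [Add E] (ρ : E → ℝ) (hρ : ∀ x y, ρ (x + y) ≤ ρ x + ρ y)
    (X Y : Fin 5 → E) (hpos : ∀ j, 0 ≤ ρ (X j + Y j)) :
    frtbES ρ (fun j => X j + Y j) ≤ frtbES ρ X + frtbES ρ Y :=
  calc frtbES ρ (fun j => X j + Y j) ≤ √(∑ j, (ρ (X j) + ρ (Y j)) ^ 2) :=
        Real.sqrt_le_sqrt <| Finset.sum_le_sum fun j _ =>
          pow_le_pow_left₀ (hpos j) (hρ (X j) (Y j)) 2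
    _ ≤ frtbES ρ X + frtbES ρ Y := Real.sqrt_sum_add_sq_le _ _

theorem imcc_subadditive_general {E : Type*} [AddCommGroup E]
    (ρRS ρRC ρFC : E → ℝ)
    (hsubFC : ∀ x y : E, ρFC (x + y) ≤ ρFC x + ρFC y)
    (X Y : Fin 5 → E)
    (hpos : ∀ j, 0 ≤ ρFC (X j + Y j))
    (hX : frtbES ρRS (fun j => X j + Y j) / frtbES ρRC (fun j => X j + Y j)
          ≤ frtbES ρRS X / frtbES ρRC X)
    (hY : frtbES ρRS (fun j => X j + Y j) / frtbES ρRC (fun j => X j + Y j)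
          ≤ frtbES ρRS Y / frtbES ρRC Y) :
    rowIMCC ρRS ρRC ρFC (fun j => X j + Y j)
      ≤ rowIMCC ρRS ρRC ρFC X + rowIMCC ρRS ρRC ρFC Y := by
  set r := frtbES ρRS (fun j => X j + Y j) / frtbES ρRC (fun j => X j + Y j)
  have hr : 0 ≤ r := div_nonneg (frtbES_nonneg _ _) (frtbES_nonneg _ _)
  calc rowIMCC ρRS ρRC ρFC (fun j => X j + Y j)
      ≤ r * (frtbES ρFC X + frtbES ρFC Y) :=
        mul_le_mul_of_nonneg_left (frtbES_add_le ρFC hsubFC X Y hpos) hr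
    _ = r * frtbES ρFC X + r * frtbES ρFC Y := mul_add _ _ _
    _ ≤ rowIMCC ρRS ρRC ρFC X + rowIMCC ρRS ρRC ρFC Y :=
        add_le_add (mul_le_mul_of_nonneg_right hX (frtbES_nonneg _ _))
          (mul_le_mul_of_nonneg_right hY (frtbES_nonneg _ _))

/-- Sub-additivity of IMCC (Lemma 2.1(iii)). -/
theorem imcc_subadditive {E : Type*} [AddCommGroup E] [Module ℝ E]
    (ρRS ρRC ρFC : E → ℝ)
    (hsubFC : ∀ x y : E, ρFC (x + y) ≤ ρFC x + ρFC y)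
    (X Y : Fin 5 → E)
    (hpos : ∀ j, 0 ≤ ρFC (X j + Y j))
    (hX : frtbES ρRS (fun j => X j + Y j) / frtbES ρRC (fun j => X j + Y j)
          ≤ frtbES ρRS X / frtbES ρRC X)
    (hY : frtbES ρRS (fun j => X j + Y j) / frtbES ρRC (fun j => X j + Y j)
          ≤ frtbES ρRS Y / frtbES ρRC Y) :
    rowIMCC ρRS ρRC ρFC (fun j => X j + Y j)
      ≤ rowIMCC ρRS ρRC ρFC X + rowIMCC ρRS ρRC ρFC Y :=
  imcc_subadditive_general ρRS ρRC ρFC hsubFC X Y hpos hX hY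
end

section
/- Sub-additivity of the floored FRTB expected shortfall without any positivity assumption (claim in Example 2.2 / Remark 2.2): Let E be a real vector space and ρ : E → ℝ a subadditive functional. Define the floored FRTB expected shortfall of a row X : Fin 5 → E by ES⁺_ρ(X) = sqrt(∑_j max(ρ(X j), 0)²). Then for all rows X, Y : Fin 5 → E, ES⁺_ρ(X + Y) ≤ ES⁺_ρ(X) + ES⁺_ρ(Y), where (X + Y) j = X j + Y j. -/
/-!
Flooring `t ↦ max t 0` is monotone and subadditive, so coordinatewise the floored risks of
`X + Y` are bounded by the sum of the nonnegative floored risks of `X` and `Y`. The Euclidean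
norm is monotone on nonnegative vectors, so the claim reduces to its triangle inequality; no
positivity of `ρ` is needed because the flooring happens before aggregation.
-/

open Finset

section EuclideanSum

variable {ι : Type*} [Fintype ι]

theorem sqrt_sum_sq_eq_norm (f : ι → ℝ) :
    √(∑ i, f i ^ 2) = ‖(WithLp.toLp 2 f : EuclideanSpace ℝ ι)‖ := by
  simp only [EuclideanSpace.norm_eq, Real.norm_eq_abs, sq_abs]

theorem sqrt_sum_sq_add_le (f g : ι → ℝ) :
    √(∑ i, (f i + g i) ^ 2) ≤ √(∑ i, f i ^ 2) + √(∑ i, g i ^ 2) := by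
  have h := norm_add_le (WithLp.toLp 2 f : EuclideanSpace ℝ ι) (WithLp.toLp 2 g)
  rw [← WithLp.toLp_add] at h
  simpa only [← sqrt_sum_sq_eq_norm, Pi.add_apply] using h

theorem sqrt_sum_sq_le_sqrt_sum_sq {f g : ι → ℝ} (hf : ∀ i, 0 ≤ f i) (hfg : ∀ i, f i ≤ g i) :
    √(∑ i, f i ^ 2) ≤ √(∑ i, g i ^ 2) :=
  Real.sqrt_le_sqrt <| sum_le_sum fun i _ => pow_le_pow_left₀ (hf i) (hfg i) 2

end EuclideanSum

theorem max_add_zero_le (a b : ℝ) : max (a + b) 0 ≤ max a 0 + max b 0 := by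
  simpa only [add_zero] using max_add_add_le_max_add_max (a := a) (b := b) (c := 0) (d := 0)

noncomputable def flooredES {ι E : Type*} [Fintype ι] (ρ : E → ℝ) (X : ι → E) : ℝ :=
  √(∑ j, max (ρ (X j)) 0 ^ 2)

theorem flooredES_add_le {ι E : Type*} [Fintype ι] [Add E] {ρ : E → ℝ}
    (hsub : ∀ x y : E, ρ (x + y) ≤ ρ x + ρ y) (X Y : ι → E) :
    flooredES ρ (X + Y) ≤ flooredES ρ X + flooredES ρ Y :=
  calc flooredES ρ (X + Y)
      ≤ √(∑ j, (max (ρ (X j)) 0 + max (ρ (Y j)) 0) ^ 2) :=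
        sqrt_sum_sq_le_sqrt_sum_sq (fun _ => le_max_right _ _) fun j =>
          (max_le_max_right 0 (hsub (X j) (Y j))).trans (max_add_zero_le _ _)
    _ ≤ flooredES ρ X + flooredES ρ Y := sqrt_sum_sq_add_le _ _

theorem flooredFrtbES_subadditive_general {E : Type*} [AddCommGroup E]
    (ρ : E → ℝ)
    (hsub : ∀ x y : E, ρ (x + y) ≤ ρ x + ρ y)
    (X Y : Fin 5 → E) :
    Real.sqrt (∑ j, (max (ρ (X j + Y j)) 0) ^ 2)
      ≤ Real.sqrt (∑ j, (max (ρ (X j)) 0) ^ 2)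
        + Real.sqrt (∑ j, (max (ρ (Y j)) 0) ^ 2) :=
  flooredES_add_le hsub X Y

/-- Sub-additivity of the floored FRTB expected shortfall without any positivity
assumption (Example 2.2 / Remark 2.2). -/
theorem flooredFrtbES_subadditive {E : Type*} [AddCommGroup E] [Module ℝ E]
    (ρ : E → ℝ)
    (hsub : ∀ x y : E, ρ (x + y) ≤ ρ x + ρ y)
    (X Y : Fin 5 → E) :
    Real.sqrt (∑ j, (max (ρ (X j + Y j)) 0) ^ 2)
      ≤ Real.sqrt (∑ j, (max (ρ (X j)) 0) ^ 2)
        + Real.sqrt (∑ j, (max (ρ (Y j)) 0) ^ 2) :=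
  flooredFrtbES_subadditive_general ρ hsub X Y
end

section
/- The Euler allocation of IMCC is a full allocation (Proposition 3.4): Let N be a positive integer and for each i ∈ Fin 6 and j ∈ Fin 5 let g_{ij} : (Fin N → ℝ) → ℝ be positively homogeneous of degree 1 and Fréchet differentiable at the all-ones vector 𝟙. Set ES(i) = sqrt(∑_{j ∈ Fin 5} g_{ij}(𝟙)²) and assume ES(i) ≠ 0 for every i ∈ Fin 6. Given real numbers s_i (the stress-period scaling factors), define the Euler allocation of IMCC by IMCC^E_n(i,j) = 0.5 · s_i · (g_{ij}(𝟙)/ES(i)) · (fderiv ℝ g_{ij} 𝟙)(e_n). Then ∑_{n ∈ Fin N} ∑_{i ∈ Fin 6} ∑_{j ∈ Fin 5} IMCC^E_n(i,j) = 0.5 · ∑_{i ∈ Fin 6} s_i · ES(i). -/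
/-!
Euler's theorem for positively homogeneous functions gives `∑ n, ∂ₙ g i j 𝟙 = g i j 𝟙` in every
bucket, so the allocation sums to `0.5 * ∑ i, s i * ∑ j, g i j 𝟙 ^ 2 / ES i = 0.5 * ∑ i, s i * ES i`.
-/

open Finset

theorem fderiv_apply_self_of_smul_eq {E F : Type*} [NormedAddCommGroup E] [NormedSpace ℝ E]
    [NormedAddCommGroup F] [NormedSpace ℝ F] {f : E → F} {x : E}
    (hhom : ∀ a : ℝ, 0 < a → f (a • x) = a • f x) (hdiff : DifferentiableAt ℝ f x) :
    fderiv ℝ f x x = f x := by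
  have hray : HasDerivAt (fun a : ℝ => a • x) x 1 := by
    simpa using (hasDerivAt_id (1 : ℝ)).smul_const x
  have hchain : HasDerivAt (fun a : ℝ => f (a • x)) (fderiv ℝ f x x) 1 := by
    have hf : HasFDerivAt f (fderiv ℝ f x) ((1 : ℝ) • x) := by simpa using hdiff.hasFDerivAt
    exact hf.comp_hasDerivAt 1 hray
  have hlin : HasDerivAt (fun a : ℝ => a • f x) (f x) 1 := by
    simpa using (hasDerivAt_id (1 : ℝ)).smul_const (f x)
  have heq : (fun a : ℝ => f (a • x)) =ᶠ[nhds 1] fun a => a • f x := by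
    filter_upwards [eventually_gt_nhds one_pos] with a ha using hhom a ha
  exact hchain.unique (hlin.congr_of_eventuallyEq heq)

theorem sum_fderiv_single_eq_of_smul_eq {ι F : Type*} [Fintype ι] [DecidableEq ι]
    [NormedAddCommGroup F] [NormedSpace ℝ F] {f : (ι → ℝ) → F}
    (hhom : ∀ a : ℝ, 0 < a → f (a • 1) = a • f 1) (hdiff : DifferentiableAt ℝ f 1) :
    ∑ n, fderiv ℝ f 1 (Pi.single n 1) = f 1 := by
  have hones : ∑ n, Pi.single n (1 : ℝ) = (1 : ι → ℝ) := univ_sum_single 1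
  rw [← map_sum, hones, fderiv_apply_self_of_smul_eq hhom hdiff]

theorem sum_div_sqrt_sum_sq_mul_self {ι : Type*} [Fintype ι] (x : ι → ℝ) :
    ∑ j, x j / √(∑ k, x k ^ 2) * x j = √(∑ k, x k ^ 2) := by
  simp_rw [div_mul_eq_mul_div, ← sq, ← sum_div, Real.div_sqrt]

theorem euler_allocation_full_general {N : ℕ}
    (g : Fin 6 → Fin 5 → (Fin N → ℝ) → ℝ)
    (hhom : ∀ i j, ∀ (a : ℝ), 0 ≤ a → ∀ v : Fin N → ℝ, g i j (a • v) = a * g i j v)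
    (hdiff : ∀ i j, DifferentiableAt ℝ (g i j) (1 : Fin N → ℝ))
    (s : Fin 6 → ℝ) :
    ∑ n : Fin N, ∑ i : Fin 6, ∑ j : Fin 5,
        0.5 * s i * (g i j (1 : Fin N → ℝ) / Real.sqrt (∑ k, (g i k (1 : Fin N → ℝ)) ^ 2))
          * (fderiv ℝ (g i j) (1 : Fin N → ℝ)) (Pi.single n 1)
      = 0.5 * ∑ i : Fin 6, s i * Real.sqrt (∑ j, (g i j (1 : Fin N → ℝ)) ^ 2) := by
  have hbucket : ∀ i j, ∑ n : Fin N, fderiv ℝ (g i j) 1 (Pi.single n 1) = g i j 1 := fun i j =>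
    sum_fderiv_single_eq_of_smul_eq (fun a ha => hhom i j a ha.le 1) (hdiff i j)
  calc _ = ∑ i, ∑ j, 0.5 * s i * (g i j 1 / √(∑ k, g i k 1 ^ 2))
          * ∑ n : Fin N, fderiv ℝ (g i j) 1 (Pi.single n 1) := by
        rw [sum_comm]
        refine sum_congr rfl fun i _ => ?_
        rw [sum_comm]
        simp_rw [mul_sum]
    _ = 0.5 * ∑ i, s i * ∑ j, g i j 1 / √(∑ k, g i k 1 ^ 2) * g i j 1 := by
        simp_rw [hbucket, mul_sum, mul_assoc]
    _ = _ := by simp_rw [sum_div_sqrt_sum_sq_mul_self]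

/-- The Euler allocation of IMCC is a full allocation (Proposition 3.4). -/
theorem euler_allocation_full {N : ℕ} (hN : 0 < N)
    (g : Fin 6 → Fin 5 → (Fin N → ℝ) → ℝ)
    (hhom : ∀ i j, ∀ (a : ℝ), 0 ≤ a → ∀ v : Fin N → ℝ, g i j (a • v) = a * g i j v)
    (hdiff : ∀ i j, DifferentiableAt ℝ (g i j) (1 : Fin N → ℝ))
    (hES : ∀ i, Real.sqrt (∑ j, (g i j (1 : Fin N → ℝ)) ^ 2) ≠ 0)
    (s : Fin 6 → ℝ) :
    ∑ n : Fin N, ∑ i : Fin 6, ∑ j : Fin 5,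
        0.5 * s i * (g i j (1 : Fin N → ℝ) / Real.sqrt (∑ k, (g i k (1 : Fin N → ℝ)) ^ 2))
          * (fderiv ℝ (g i j) (1 : Fin N → ℝ)) (Pi.single n 1)
      = 0.5 * ∑ i : Fin 6, s i * Real.sqrt (∑ j, (g i j (1 : Fin N → ℝ)) ^ 2) :=
  euler_allocation_full_general g hhom hdiff s
end

section
/- Representation of the Constrained Aumann–Shapley allocation (Lemma 3.6, case where the liquidity horizon is not first in the permutation): Let N be a positive integer, let g : (Fin N → ℝ) → ℝ be positively homogeneous of degree 1 and Fréchet differentiable at the all-ones vector 𝟙 with derivative D, suppose g(𝟙) ≠ 0, and let C > 0 be a real constant. Define F : (Fin N → ℝ) → ℝ by F(v) = sqrt(C + g(v)²), and define φ_n : ℝ → ℝ by φ_n(q) = (fderiv ℝ F (q • 𝟙))(e_n) (with the convention that fderiv is 0 at points of non-differentiability). Then for every n ∈ Fin N, ∫_0^1 φ_n(q) dq = ((sqrt(C + g(𝟙)²) − sqrt(C)) / g(𝟙)) · D(e_n). -/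
/-!
Positive homogeneity makes the derivative of `g` constant along the ray `q • 𝟙`, `q > 0`, and
gives `g (q • 𝟙) = q g(𝟙)`. By the chain rule the integrand is therefore
`q g(𝟙) / √(C + q² g(𝟙)²) · D eₙ` on `(0, 1]`, whose antiderivative in `q` is
`√(C + q² g(𝟙)²) / g(𝟙) · D eₙ`.
-/

open Real

section Homogeneous

variable {E F : Type*} [NormedAddCommGroup E] [NormedSpace ℝ E]
  [NormedAddCommGroup F] [NormedSpace ℝ F]

theorem HasFDerivAt.smul_of_posHomogeneous {g : E → F} {D : E →L[ℝ] F} {x : E} {q : ℝ}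
    (hhom : ∀ a : ℝ, 0 ≤ a → ∀ v, g (a • v) = a • g v) (hg : HasFDerivAt g D x) (hq : 0 < q) :
    HasFDerivAt g D (q • x) := by
  have hscale : HasFDerivAt (fun v : E => q⁻¹ • v) (q⁻¹ • ContinuousLinearMap.id ℝ E) (q • x) :=
    (q⁻¹ • ContinuousLinearMap.id ℝ E).hasFDerivAt
  rw [← inv_smul_smul₀ hq.ne' x] at hg
  have hrescaled := (hg.comp (q • x) hscale).const_smul q
  have hg_eq : (q • (g ∘ fun v => q⁻¹ • v)) = g := by
    funext v
    simp [hhom q⁻¹ (inv_nonneg.2 hq.le), smul_smul, hq.ne']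
  have hD_eq : q • D.comp (q⁻¹ • ContinuousLinearMap.id ℝ E) = D := by
    ext v
    simp [smul_smul, hq.ne']
  rwa [hg_eq, hD_eq] at hrescaled

end Homogeneous

theorem HasFDerivAt.sqrt_const_add_sq {E : Type*} [NormedAddCommGroup E] [NormedSpace ℝ E]
    {g : E → ℝ} {D : E →L[ℝ] ℝ} {x : E} {C : ℝ} (hC : 0 < C) (hg : HasFDerivAt g D x) :
    HasFDerivAt (fun v => √(C + g v ^ 2)) ((g x / √(C + g x ^ 2)) • D) x := by
  have hpos : 0 < C + g x ^ 2 := by positivity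
  refine (((hg.pow 2).const_add C).sqrt hpos.ne').congr_fderiv ?_
  rw [smul_smul]
  congr 1
  field_simp
  simp

theorem integral_mul_div_sqrt_const_add_sq {C : ℝ} (hC : 0 < C) (b x y : ℝ) :
    ∫ q in x..y, q * b / √(C + (q * b) ^ 2) = (√(C + (y * b) ^ 2) - √(C + (x * b) ^ 2)) / b := by
  rcases eq_or_ne b 0 with rfl | hb
  · simp
  have hderiv : ∀ q : ℝ, HasDerivAt (fun t => √(C + (t * b) ^ 2) / b) (q * b / √(C + (q * b) ^ 2)) q := by
    intro q
    have hpos : 0 < C + (q * b) ^ 2 := by positivity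
    have hinner : HasDerivAt (fun t : ℝ => C + (t * b) ^ 2) (2 * (q * b) * b) q := by
      simpa using (((hasDerivAt_id q).mul_const b).pow 2).const_add C
    refine ((hinner.sqrt hpos.ne').div_const b).congr_deriv ?_
    field_simp
  have hcont : Continuous fun q : ℝ => q * b / √(C + (q * b) ^ 2) :=
    (continuous_id.mul continuous_const).div (by fun_prop) fun q => by positivity
  rw [intervalIntegral.integral_eq_sub_of_hasDerivAt (fun q _ => hderiv q)
    (hcont.intervalIntegrable x y), sub_div]

theorem cas_representation_general {N : ℕ}
    (g : (Fin N → ℝ) → ℝ)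
    (hhom : ∀ (a : ℝ), 0 ≤ a → ∀ v : Fin N → ℝ, g (a • v) = a * g v)
    (D : (Fin N → ℝ) →L[ℝ] ℝ)
    (hg : HasFDerivAt g D (1 : Fin N → ℝ))
    (C : ℝ) (hC : 0 < C) :
    ∀ n : Fin N,
      ∫ q in (0:ℝ)..1,
          (fderiv ℝ (fun v => Real.sqrt (C + g v ^ 2)) (q • (1 : Fin N → ℝ)))
            (Pi.single n 1)
        = ((Real.sqrt (C + g (1 : Fin N → ℝ) ^ 2) - Real.sqrt C) / g (1 : Fin N → ℝ))
            * D (Pi.single n 1) := by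
  intro n
  have hintegrand : ∀ q ∈ Set.Ioc (0 : ℝ) 1,
      fderiv ℝ (fun v => √(C + g v ^ 2)) (q • (1 : Fin N → ℝ)) (Pi.single n 1)
        = q * g 1 / √(C + (q * g 1) ^ 2) * D (Pi.single n 1) := by
    intro q hq
    rw [((hg.smul_of_posHomogeneous hhom hq.1).sqrt_const_add_sq hC).fderiv, hhom q hq.1.le]
    rfl
  calc _ = ∫ q in (0 : ℝ)..1, q * g 1 / √(C + (q * g 1) ^ 2) * D (Pi.single n 1) :=
        intervalIntegral.integral_congr_ae <| .of_forall fun q hq =>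
          hintegrand q (by rwa [Set.uIoc_of_le zero_le_one] at hq)
    _ = _ := by
      rw [intervalIntegral.integral_mul_const, integral_mul_div_sqrt_const_add_sq hC]
      simp

/-- Representation of the Constrained Aumann–Shapley allocation
(Lemma 3.6, case where the liquidity horizon is not first in the permutation). -/
theorem cas_representation {N : ℕ} (hN : 0 < N)
    (g : (Fin N → ℝ) → ℝ)
    (hhom : ∀ (a : ℝ), 0 ≤ a → ∀ v : Fin N → ℝ, g (a • v) = a * g v)
    (D : (Fin N → ℝ) →L[ℝ] ℝ)
    (hg : HasFDerivAt g D (1 : Fin N → ℝ))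
    (hne : g (1 : Fin N → ℝ) ≠ 0)
    (C : ℝ) (hC : 0 < C) :
    ∀ n : Fin N,
      ∫ q in (0:ℝ)..1,
          (fderiv ℝ (fun v => Real.sqrt (C + g v ^ 2)) (q • (1 : Fin N → ℝ)))
            (Pi.single n 1)
        = ((Real.sqrt (C + g (1 : Fin N → ℝ) ^ 2) - Real.sqrt C) / g (1 : Fin N → ℝ))
            * D (Pi.single n 1) :=
  cas_representation_general g hhom D hg C hC
end

section
/- The Constrained Aumann–Shapley allocation of IMCC is a full allocation (Proposition 3.8): Let N be a positive integer and for each i ∈ Fin 6 and j ∈ Fin 5 let g_{ij} : (Fin N → ℝ) → ℝ be positively homogeneous of degree 1 and Fréchet differentiable at the all-ones vector 𝟙, with g_{ij}(𝟙) ≠ 0. For a permutation σ of Fin 5 define η(σ,i,j) = ( sqrt(∑_{s ≤ σ⁻¹(j)} g_{i,σ(s)}(𝟙)²) − sqrt(∑_{s < σ⁻¹(j)} g_{i,σ(s)}(𝟙)²) ) / g_{ij}(𝟙), and define CAS_n(σ,i,j) = η(σ,i,j) · (fderiv ℝ g_{ij} 𝟙)(e_n). Given real numbers s_i, define the CAS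 allocation of IMCC by IMCC^C_n(i,j) = 0.5 · s_i · (1/5!) · ∑_{σ ∈ Perm(Fin 5)} CAS_n(σ,i,j). Then ∑_{n ∈ Fin N} ∑_{i ∈ Fin 6} ∑_{j ∈ Fin 5} IMCC^C_n(i,j) = 0.5 · ∑_{i ∈ Fin 6} s_i · sqrt(∑_{j ∈ Fin 5} g_{ij}(𝟙)²). -/
/-!
By Euler's identity for positively homogeneous functions, summing the risk factor derivatives
`∂g_{ij}/∂v_n (𝟙)` over `n` gives back `g_{ij}(𝟙)`, which cancels the denominator of `η`. What is
left, for each row `i` and each ordering `σ` of the columns, is the sum of the increments of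
`√(g_{iσ(0)}² + ⋯ + g_{iσ(t)}²)` along `σ`, which telescopes to `√(∑_j g_{ij}²)` whatever `σ` is;
averaging over the `5!` orderings therefore returns the row's expected shortfall.
-/

open Finset

theorem fderiv_apply_self_of_pos_homogeneous {E F : Type*}
    [NormedAddCommGroup E] [NormedSpace ℝ E] [NormedAddCommGroup F] [NormedSpace ℝ F] {f : E → F} {x : E}
    (hhom : ∀ a : ℝ, 0 < a → f (a • x) = a • f x) (hf : DifferentiableAt ℝ f x) :
    fderiv ℝ f x x = f x := by
  have hray : HasDerivAt (fun a : ℝ => a • x) x 1 := by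
    simpa using (hasDerivAt_id (1 : ℝ)).smul_const x
  have hchain : HasDerivAt (fun a : ℝ => f (a • x)) (fderiv ℝ f x x) 1 := by
    refine HasFDerivAt.comp_hasDerivAt (1 : ℝ) ?_ hray
    simpa using hf.hasFDerivAt
  have hscale : HasDerivAt (fun a : ℝ => a • f x) (f x) 1 := by
    simpa using (hasDerivAt_id (1 : ℝ)).smul_const (f x)
  have hlin : HasDerivAt (fun a : ℝ => f (a • x)) (f x) 1 := by
    refine hscale.congr_of_eventuallyEq ?_
    filter_upwards [eventually_gt_nhds one_pos] with a ha
    exact hhom a ha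
  exact hchain.unique hlin

theorem sum_fin_filter_le_sub_filter_lt {M : Type*} [AddCommGroup M] {m : ℕ}
    (φ : Finset (Fin m) → M) :
    ∑ k : Fin m, (φ (univ.filter (· ≤ k)) - φ (univ.filter (· < k))) = φ univ - φ ∅ := by
  set G : ℕ → M := fun k => φ (univ.filter fun t : Fin m => (t : ℕ) < k)
  have hle (k : Fin m) : univ.filter (· ≤ k) = univ.filter fun t : Fin m => (t : ℕ) < k + 1 :=
    Finset.ext fun t => by simp
  have hlt (k : Fin m) : univ.filter (· < k) = univ.filter fun t : Fin m => (t : ℕ) < k :=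
    Finset.ext fun t => by simp
  have hm : G m = φ univ := by simp [G]
  have h0 : G 0 = φ ∅ := by simp [G]
  calc ∑ k : Fin m, (φ (univ.filter (· ≤ k)) - φ (univ.filter (· < k)))
      = ∑ k ∈ range m, (G (k + 1) - G k) := by
        simp only [hle, hlt]; exact Fin.sum_univ_eq_sum_range (fun k => G (k + 1) - G k) m
    _ = φ univ - φ ∅ := by rw [sum_range_sub, hm, h0]

theorem sum_sqrt_prefix_increments_eq_sqrt_sum_sq {m : ℕ} (b : Fin m → ℝ)
    (σ : Equiv.Perm (Fin m)) :
    ∑ j, (√(∑ t ∈ univ.filter (· ≤ σ.symm j), b (σ t) ^ 2)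
        - √(∑ t ∈ univ.filter (· < σ.symm j), b (σ t) ^ 2)) = √(∑ j, b j ^ 2) := by
  rw [← Equiv.sum_comp σ]
  simp only [Equiv.symm_apply_apply]
  rw [sum_fin_filter_le_sub_filter_lt fun S => √(∑ t ∈ S, b (σ t) ^ 2),
    Equiv.sum_comp σ fun j => b j ^ 2]
  simp

theorem cas_allocation_full_general {N : ℕ}
    (g : Fin 6 → Fin 5 → (Fin N → ℝ) → ℝ)
    (hhom : ∀ i j, ∀ (a : ℝ), 0 ≤ a → ∀ v : Fin N → ℝ, g i j (a • v) = a * g i j v)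
    (hdiff : ∀ i j, DifferentiableAt ℝ (g i j) (1 : Fin N → ℝ))
    (hne : ∀ i j, g i j (1 : Fin N → ℝ) ≠ 0)
    (s : Fin 6 → ℝ) :
    ∑ n : Fin N, ∑ i : Fin 6, ∑ j : Fin 5,
        0.5 * s i * ((1 : ℝ) / (Nat.factorial 5))
          * ∑ σ : Equiv.Perm (Fin 5),
              ((Real.sqrt (∑ t ∈ Finset.univ.filter (fun t => t ≤ σ.symm j),
                    (g i (σ t) (1 : Fin N → ℝ)) ^ 2)
                - Real.sqrt (∑ t ∈ Finset.univ.filter (fun t => t < σ.symm j),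
                    (g i (σ t) (1 : Fin N → ℝ)) ^ 2))
                  / g i j (1 : Fin N → ℝ))
                * (fderiv ℝ (g i j) (1 : Fin N → ℝ)) (Pi.single n 1)
      = 0.5 * ∑ i : Fin 6, s i * Real.sqrt (∑ j, (g i j (1 : Fin N → ℝ)) ^ 2) := by
  have euler (i j) : ∑ n : Fin N, fderiv ℝ (g i j) 1 (Pi.single n 1) = g i j 1 := by
    rw [← map_sum,
      ← fderiv_apply_self_of_pos_homogeneous (fun a ha => hhom i j a ha.le 1) (hdiff i j)]
    simpa using congrArg (fderiv ℝ (g i j) 1) (univ_sum_single (1 : Fin N → ℝ))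
  have shapley (i) (σ : Equiv.Perm (Fin 5)) :
      ∑ j, (√(∑ t ∈ univ.filter (· ≤ σ.symm j), g i (σ t) 1 ^ 2)
        - √(∑ t ∈ univ.filter (· < σ.symm j), g i (σ t) 1 ^ 2)) / g i j 1 * g i j 1
        = √(∑ j, g i j 1 ^ 2) := by
    simp only [div_mul_cancel₀ _ (hne i _)]
    exact sum_sqrt_prefix_increments_eq_sqrt_sum_sq (fun j => g i j 1) σ
  rw [sum_comm, mul_sum]
  refine sum_congr rfl fun i _ => ?_
  rw [sum_comm]
  simp_rw [← mul_sum, ← sum_mul, ← mul_sum, euler, sum_mul]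
  rw [sum_comm]
  simp_rw [shapley]
  rw [sum_const, card_univ, Fintype.card_perm, Fintype.card_fin, nsmul_eq_mul]
  field_simp

/-- The Constrained Aumann–Shapley allocation of IMCC is a full allocation
(Proposition 3.8). -/
theorem cas_allocation_full {N : ℕ} (hN : 0 < N)
    (g : Fin 6 → Fin 5 → (Fin N → ℝ) → ℝ)
    (hhom : ∀ i j, ∀ (a : ℝ), 0 ≤ a → ∀ v : Fin N → ℝ, g i j (a • v) = a * g i j v)
    (hdiff : ∀ i j, DifferentiableAt ℝ (g i j) (1 : Fin N → ℝ))
    (hne : ∀ i j, g i j (1 : Fin N → ℝ) ≠ 0)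
    (s : Fin 6 → ℝ) :
    ∑ n : Fin N, ∑ i : Fin 6, ∑ j : Fin 5,
        0.5 * s i * ((1 : ℝ) / (Nat.factorial 5))
          * ∑ σ : Equiv.Perm (Fin 5),
              ((Real.sqrt (∑ t ∈ Finset.univ.filter (fun t => t ≤ σ.symm j),
                    (g i (σ t) (1 : Fin N → ℝ)) ^ 2)
                - Real.sqrt (∑ t ∈ Finset.univ.filter (fun t => t < σ.symm j),
                    (g i (σ t) (1 : Fin N → ℝ)) ^ 2))
                  / g i j (1 : Fin N → ℝ))
                * (fderiv ℝ (g i j) (1 : Fin N → ℝ)) (Pi.single n 1)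
      = 0.5 * ∑ i : Fin 6, s i * Real.sqrt (∑ j, (g i j (1 : Fin N → ℝ)) ^ 2) :=
  cas_allocation_full_general g hhom hdiff hne s
end

section
/- Per-row full allocation of the Constrained Aumann–Shapley allocation for a fixed permutation (key identity in the proof of Proposition 3.8): Let N be a positive integer and for each j ∈ Fin 5 let g_j : (Fin N → ℝ) → ℝ be positively homogeneous of degree 1 and Fréchet differentiable at the all-ones vector 𝟙, with g_j(𝟙) ≠ 0. Let σ be a permutation of Fin 5 and define η(σ,j) = ( sqrt(∑_{s ≤ σ⁻¹(j)} g_{σ(s)}(𝟙)²) − sqrt(∑_{s < σ⁻¹(j)} g_{σ(s)}(𝟙)²) ) / g_j(𝟙). Then ∑_{n ∈ Fin N} ∑_{j ∈ Fin 5} η(σ,j) · (fderiv ℝ g_j 𝟙)(e_n) = sqrt(∑_{j ∈ Fin 5} g_j(𝟙)²). -/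
/-- Per-row full allocation of the Constrained Aumann–Shapley allocation for a
fixed permutation (key identity in the proof of Proposition 3.8). -/
theorem cas_per_row_full {N : ℕ} (hN : 0 < N)
    (g : Fin 5 → (Fin N → ℝ) → ℝ)
    (hhom : ∀ j, ∀ (a : ℝ), 0 ≤ a → ∀ v : Fin N → ℝ, g j (a • v) = a * g j v)
    (hdiff : ∀ j, DifferentiableAt ℝ (g j) (1 : Fin N → ℝ))
    (hne : ∀ j, g j (1 : Fin N → ℝ) ≠ 0)
    (σ : Equiv.Perm (Fin 5)) :
    ∑ n : Fin N, ∑ j : Fin 5,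
        ((Real.sqrt (∑ t ∈ Finset.univ.filter (fun t => t ≤ σ.symm j),
              (g (σ t) (1 : Fin N → ℝ)) ^ 2)
          - Real.sqrt (∑ t ∈ Finset.univ.filter (fun t => t < σ.symm j),
              (g (σ t) (1 : Fin N → ℝ)) ^ 2))
            / g j (1 : Fin N → ℝ))
          * (fderiv ℝ (g j) (1 : Fin N → ℝ)) (Pi.single n 1)
      = Real.sqrt (∑ j : Fin 5, (g j (1 : Fin N → ℝ)) ^ 2) := by
  -- Euler's identity: D(𝟙) = g(𝟙)
  have euler : ∀ j, (fderiv ℝ (g j) (1 : Fin N → ℝ)) (1 : Fin N → ℝ)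
      = g j (1 : Fin N → ℝ) := by
    intro j
    have hc : HasDerivAt (fun t : ℝ => t • (1 : Fin N → ℝ)) (1 : Fin N → ℝ) 1 := by
      simpa using (hasDerivAt_id (1:ℝ)).smul_const (1 : Fin N → ℝ)
    have hF : HasFDerivAt (g j) (fderiv ℝ (g j) (1 : Fin N → ℝ))
        ((fun t : ℝ => t • (1 : Fin N → ℝ)) 1) := by
      simpa using (hdiff j).hasFDerivAt
    have h1 : HasDerivAt (fun t : ℝ => g j (t • (1 : Fin N → ℝ)))
        ((fderiv ℝ (g j) (1 : Fin N → ℝ)) (1 : Fin N → ℝ)) 1 :=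
      hF.comp_hasDerivAt 1 hc
    have h2 : HasDerivAt (fun t : ℝ => g j (t • (1 : Fin N → ℝ)))
        (g j (1 : Fin N → ℝ)) 1 := by
      have h2' : HasDerivAt (fun t : ℝ => t * g j (1 : Fin N → ℝ))
          (g j (1 : Fin N → ℝ)) 1 := by
        simpa using (hasDerivAt_id (1:ℝ)).mul_const (g j (1 : Fin N → ℝ))
      apply h2'.congr_of_eventuallyEq
      filter_upwards [Ioi_mem_nhds (show (0:ℝ) < 1 by norm_num)] with t ht
      exact (hhom j t ht.le 1)
    exact h1.unique h2
  have hsingle : ∑ n : Fin N, (Pi.single n 1 : Fin N → ℝ) = 1 := by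
    funext i
    simp [Finset.sum_apply, Pi.single_apply]
  have hrow : ∀ j, ∑ n : Fin N,
      (fderiv ℝ (g j) (1 : Fin N → ℝ)) (Pi.single n 1) = g j (1 : Fin N → ℝ) := by
    intro j
    rw [← map_sum, hsingle, euler j]
  rw [Finset.sum_comm]
  set a : Fin 5 → ℝ := fun s => g (σ s) (1 : Fin N → ℝ) ^ 2 with ha
  set F : Fin 5 → ℝ := fun s =>
      Real.sqrt (∑ t ∈ Finset.univ.filter (fun t => t ≤ s), a t)
    - Real.sqrt (∑ t ∈ Finset.univ.filter (fun t => t < s), a t) with hFdef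
  have step1 : ∑ j : Fin 5, ∑ n : Fin N,
      ((Real.sqrt (∑ t ∈ Finset.univ.filter (fun t => t ≤ σ.symm j),
              (g (σ t) (1 : Fin N → ℝ)) ^ 2)
          - Real.sqrt (∑ t ∈ Finset.univ.filter (fun t => t < σ.symm j),
              (g (σ t) (1 : Fin N → ℝ)) ^ 2))
            / g j (1 : Fin N → ℝ))
          * (fderiv ℝ (g j) (1 : Fin N → ℝ)) (Pi.single n 1)
      = ∑ j : Fin 5, F (σ.symm j) := by
    refine Finset.sum_congr rfl fun j _ => ?_
    rw [← Finset.mul_sum, hrow j, div_mul_cancel₀ _ (hne j)]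
  rw [step1, Equiv.sum_comp σ.symm F]
  have hrhs : ∑ j : Fin 5, (g j (1 : Fin N → ℝ)) ^ 2 = ∑ s : Fin 5, a s :=
    (Equiv.sum_comp σ (fun j => g j (1 : Fin N → ℝ) ^ 2)).symm
  rw [hrhs]
  have e0 : (Finset.univ.filter (fun t : Fin 5 => t ≤ 0)) = {0} := by decide
  have e1 : (Finset.univ.filter (fun t : Fin 5 => t ≤ 1)) = {0,1} := by decide
  have e2 : (Finset.univ.filter (fun t : Fin 5 => t ≤ 2)) = {0,1,2} := by decide
  have e3 : (Finset.univ.filter (fun t : Fin 5 => t ≤ 3)) = {0,1,2,3} := by decide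
  have e4 : (Finset.univ.filter (fun t : Fin 5 => t ≤ 4)) = Finset.univ := by decide
  have l0 : (Finset.univ.filter (fun t : Fin 5 => t < 0)) = ∅ := by decide
  have l1 : (Finset.univ.filter (fun t : Fin 5 => t < 1)) = {0} := by decide
  have l2 : (Finset.univ.filter (fun t : Fin 5 => t < 2)) = {0,1} := by decide
  have l3 : (Finset.univ.filter (fun t : Fin 5 => t < 3)) = {0,1,2} := by decide
  have l4 : (Finset.univ.filter (fun t : Fin 5 => t < 4)) = {0,1,2,3} := by decide
  simp only [hFdef, Fin.sum_univ_five, e0, e1, e2, e3, e4, l0, l1, l2, l3, l4]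
  rw [Finset.sum_empty, Real.sqrt_zero]
  simp only [Fin.sum_univ_five, Finset.sum_insert, Finset.mem_insert,
    Finset.sum_singleton]
  norm_num [Finset.sum_insert, Finset.mem_insert, Finset.mem_singleton]
end
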